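/- arXiv:2009.07064 — 2 statements merged into one kernel-verified Lean document; each statement's English description precedes it below -/
import Mathlib

section
/- Let H : ℝ → Matrix (Fin M) (Fin K) ℂ be a matrix-valued function differentiable at t₀, and let u : ℝ → (Fin M → ℂ), v : ℝ → (Fin K → ℂ), and λ : ℝ → ℝ be functions differentiable at t₀ such that for all t in a neighborhood of t₀: (H t).mulVec (v t) = (λ t : ℂ) • (u t), (H t)ᴴ.mulVec (u t) = (λ t : ℂ) • (v t), star (u t) ⬝ᵥ (u t) = 1, and star (v t) ⬝ᵥ (v t) = 1. Then the derivative of λ at t₀ equals the real part of star (u t₀) ⬝ᵥ ((deriv H t₀).mulVec (v t₀)). (Paper's Proposition 1: the derivative of the k-th singular value of a parametrized channel matrix with respect to a parameter is λ'(t₀) = Re{u_k* H'(t₀) v_k}.) -/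
open Matrix

attribute [local instance] Matrix.normedAddCommGroup Matrix.normedSpace

private lemma hasDerivAt_dot {n : ℕ} {a b : ℝ → Fin n → ℂ} {a' b' : Fin n → ℂ} {t : ℝ}
    (ha : HasDerivAt a a' t) (hb : HasDerivAt b b' t) :
    HasDerivAt (fun s => a s ⬝ᵥ b s) (a' ⬝ᵥ b t + a t ⬝ᵥ b') t := by
  have h : HasDerivAt (fun s => ∑ i, a s i * b s i)
      (∑ i, (a' i * b t i + a t i * b' i)) t :=
    HasDerivAt.fun_sum fun i _ => ((hasDerivAt_pi.1 ha i).mul (hasDerivAt_pi.1 hb i))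
  simpa [dotProduct, Finset.sum_add_distrib] using h

private lemma hasDerivAt_star_pi {n : ℕ} {a : ℝ → Fin n → ℂ} {a' : Fin n → ℂ} {t : ℝ}
    (ha : HasDerivAt a a' t) :
    HasDerivAt (fun s => star (a s)) (star a') t := by
  refine hasDerivAt_pi.2 fun i => ?_
  simpa using (hasDerivAt_pi.1 ha i).star

private lemma hasDerivAt_mulVec {M K : ℕ} {H : ℝ → Matrix (Fin M) (Fin K) ℂ}
    {H' : Matrix (Fin M) (Fin K) ℂ} {v : ℝ → Fin K → ℂ} {v' : Fin K → ℂ} {t : ℝ}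
    (hH : HasDerivAt H H' t) (hv : HasDerivAt v v' t) :
    HasDerivAt (fun s => (H s).mulVec (v s)) (H'.mulVec (v t) + (H t).mulVec v') t := by
  refine hasDerivAt_pi.2 fun i => ?_
  have hHi : HasDerivAt (fun s => H s i) (H' i) t := hasDerivAt_pi.1 hH i
  simpa [Matrix.mulVec, Pi.add_apply] using hasDerivAt_dot hHi hv

/-- Paper's Proposition 1: the derivative of a singular value `λ(t)` of a parametrized
channel matrix `H(t)`, with unit-norm left/right singular vectors `u(t)`, `v(t)`,
is `λ'(t₀) = Re{u(t₀)* H'(t₀) v(t₀)}`. -/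
theorem singular_value_deriv {M K : ℕ}
    (H : ℝ → Matrix (Fin M) (Fin K) ℂ)
    (u : ℝ → (Fin M → ℂ)) (v : ℝ → (Fin K → ℂ)) (lam : ℝ → ℝ) (t₀ : ℝ)
    (hH : DifferentiableAt ℝ H t₀) (hu : DifferentiableAt ℝ u t₀)
    (hv : DifferentiableAt ℝ v t₀) (hlam : DifferentiableAt ℝ lam t₀)
    (h1 : ∀ᶠ t in nhds t₀, (H t).mulVec (v t) = (lam t : ℂ) • (u t))
    (h2 : ∀ᶠ t in nhds t₀, (H t)ᴴ.mulVec (u t) = (lam t : ℂ) • (v t))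
    (h3 : ∀ᶠ t in nhds t₀, star (u t) ⬝ᵥ (u t) = 1)
    (h4 : ∀ᶠ t in nhds t₀, star (v t) ⬝ᵥ (v t) = 1) :
    deriv lam t₀ = (star (u t₀) ⬝ᵥ (deriv H t₀).mulVec (v t₀)).re := by
  set u' := deriv u t₀ with hu'def
  set v' := deriv v t₀ with hv'def
  set H' := deriv H t₀ with hH'def
  have hud : HasDerivAt u u' t₀ := hu.hasDerivAt
  have hvd : HasDerivAt v v' t₀ := hv.hasDerivAt
  have hHd : HasDerivAt H H' t₀ := hH.hasDerivAt
  have hlamd : HasDerivAt lam (deriv lam t₀) t₀ := hlam.hasDerivAt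
  -- derivative of F t = star (u t) ⬝ᵥ H t *ᵥ v t
  have hF : HasDerivAt (fun t => star (u t) ⬝ᵥ (H t).mulVec (v t))
      (star u' ⬝ᵥ (H t₀).mulVec (v t₀) + star (u t₀) ⬝ᵥ H'.mulVec (v t₀)
        + star (u t₀) ⬝ᵥ (H t₀).mulVec v') t₀ := by
    have := hasDerivAt_dot (hasDerivAt_star_pi hud) (hasDerivAt_mulVec hHd hvd)
    simpa [dotProduct_add, add_assoc] using this
  -- F =ᶠ (lam : ℂ) near t₀
  have hFG : (fun t => star (u t) ⬝ᵥ (H t).mulVec (v t)) =ᶠ[nhds t₀]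
      (fun t => ((lam t : ℂ))) := by
    filter_upwards [h1, h3] with t e1 e3
    rw [e1, dotProduct_smul, e3]
    simp
  have hG : HasDerivAt (fun t => ((lam t : ℂ))) (((deriv lam t₀ : ℝ) : ℂ)) t₀ := by
    exact hlamd.ofReal_comp
  have hD : (star u' ⬝ᵥ (H t₀).mulVec (v t₀) + star (u t₀) ⬝ᵥ H'.mulVec (v t₀)
        + star (u t₀) ⬝ᵥ (H t₀).mulVec v') = (((deriv lam t₀ : ℝ) : ℂ)) :=
    (hF.congr_of_eventuallyEq hFG.symm).unique hG
  have e1 := h1.self_of_nhds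
  have e2 := h2.self_of_nhds
  -- unit-norm constraints: derivatives vanish
  have hPu : (star u' ⬝ᵥ u t₀ + star (u t₀) ⬝ᵥ u') = 0 := by
    have hp := hasDerivAt_dot (hasDerivAt_star_pi hud) hud
    exact (hp.congr_of_eventuallyEq (Filter.EventuallyEq.symm h3)).unique
      (hasDerivAt_const t₀ (1 : ℂ))
  have hPv : (star v' ⬝ᵥ v t₀ + star (v t₀) ⬝ᵥ v') = 0 := by
    have hp := hasDerivAt_dot (hasDerivAt_star_pi hvd) hvd
    exact (hp.congr_of_eventuallyEq (Filter.EventuallyEq.symm h4)).unique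
      (hasDerivAt_const t₀ (1 : ℂ))
  have hru : (star u' ⬝ᵥ u t₀).re = 0 := by
    have hs : star u' ⬝ᵥ u t₀ = star (star (u t₀) ⬝ᵥ u') := star_dotProduct _ _
    have h0 := congrArg Complex.re hPu
    rw [hs] at h0 ⊢
    simp only [Complex.add_re, Complex.zero_re] at h0
    simp only [RCLike.star_def, Complex.conj_re] at h0 ⊢
    linarith
  have hrv : (star (v t₀) ⬝ᵥ v').re = 0 := by
    have hs : star v' ⬝ᵥ v t₀ = star (star (v t₀) ⬝ᵥ v') := star_dotProduct _ _
    have h0 := congrArg Complex.re hPv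
    rw [hs] at h0
    simp only [Complex.add_re, Complex.zero_re] at h0
    simp only [RCLike.star_def, Complex.conj_re] at h0
    linarith
  -- first term has zero real part
  have hA : (star u' ⬝ᵥ (H t₀).mulVec (v t₀)).re = 0 := by
    rw [e1, dotProduct_smul]
    simp [Complex.mul_re, hru]
  -- third term has zero real part
  have hC : (star (u t₀) ⬝ᵥ (H t₀).mulVec v').re = 0 := by
    have hvm : star (u t₀) ᵥ* (H t₀) = (lam t₀ : ℂ) • star (v t₀) := by
      have := congrArg star (Matrix.mulVec_conjTranspose (H t₀) (u t₀))
      rw [star_star] at this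
      rw [← this, e2, star_smul]
      simp
    rw [Matrix.dotProduct_mulVec, hvm, smul_dotProduct]
    simp [Complex.mul_re, hrv]
  have hfin := congrArg Complex.re hD
  simp only [Complex.add_re, Complex.ofReal_re, hA, hC] at hfin
  linarith
end

section
/- Let K ∈ ℕ, K > 0, let λ : Fin K → ℝ with λ i > 0 for all i, and define S(λ) = ∑ i, λ i and the effective rank ξ(λ) = Real.exp (− ∑ i, (λ i / S λ) * Real.log (λ i / S λ)). Fix k ∈ Fin K and define C j k = (∑_{i ≠ k} λ i) if j = k and C j k = −(λ j) if j ≠ k. Then the function t ↦ ξ (Function.update λ k t) has derivative at t = λ k equal to −(∑ j, (C j k / (S λ)²) * (1 + Real.log (λ j / S λ))) * ξ(λ). (Equations (12)–(13) in the paper: the partial derivative of the effective rank with respect to the k-th singular value.) -/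
/-- Equations (12)–(13) in the paper: the partial derivative of the effective rank
`ξ(λ) = exp(−∑_i (λ_i/S) ln(λ_i/S))`, `S = ∑_i λ_i`, with respect to the `k`-th
singular value is `−(∑_j C_{j,k}/S² (1 + ln(λ_j/S))) ξ(λ)`, where
`C_{j,k} = ∑_{i≠k} λ_i` if `j = k` and `C_{j,k} = −λ_j` otherwise. -/
theorem effective_rank_partial_deriv {K : ℕ} (hK : 0 < K)
    (lam : Fin K → ℝ) (hlam : ∀ i, 0 < lam i)
    (S : (Fin K → ℝ) → ℝ) (hS : ∀ μ : Fin K → ℝ, S μ = ∑ i, μ i)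
    (ξ : (Fin K → ℝ) → ℝ)
    (hξ : ∀ μ : Fin K → ℝ,
      ξ μ = Real.exp (-∑ i, (μ i / S μ) * Real.log (μ i / S μ)))
    (k : Fin K) (C : Fin K → Fin K → ℝ)
    (hC : ∀ j, C j k = if j = k then ∑ i ∈ Finset.univ.erase k, lam i else -(lam j)) :
    HasDerivAt (fun t => ξ (Function.update lam k t))
      (-(∑ j, (C j k / (S lam) ^ 2) * (1 + Real.log (lam j / S lam))) * ξ lam)
      (lam k) := by
  classical
  set t0 := lam k with ht0
  set c : ℝ := ∑ i ∈ Finset.univ.erase k, lam i with hc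
  have hspos : 0 < S lam := by
    rw [hS]; exact Finset.sum_pos (fun i _ => hlam i) ⟨k, Finset.mem_univ k⟩
  have hsne : S lam ≠ 0 := ne_of_gt hspos
  have hs : t0 + c = S lam := by
    rw [hS, ← Finset.add_sum_erase _ _ (Finset.mem_univ k)]
  have hfun : (fun t => ξ (Function.update lam k t))
      = fun t => Real.exp (-∑ i, (Function.update lam k t i / (t + c)) *
          Real.log (Function.update lam k t i / (t + c))) := by
    funext t
    rw [hξ, hS, Finset.sum_update_of_mem (Finset.mem_univ k), ← Finset.erase_eq]
  rw [hfun]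
  have hne : t0 + c ≠ 0 := by rw [hs]; exact hsne
  have key : ∀ j : Fin K, HasDerivAt
      (fun t => (Function.update lam k t j / (t + c)) *
        Real.log (Function.update lam k t j / (t + c)))
      ((C j k / (S lam) ^ 2) * (1 + Real.log (lam j / S lam))) t0 := by
    intro j
    by_cases hjk : j = k
    · subst hjk
      simp only [Function.update_self]
      have hq : HasDerivAt (fun t => t / (t + c))
          ((1 * (t0 + c) - t0 * 1) / (t0 + c) ^ 2) t0 :=
        (hasDerivAt_id t0).div ((hasDerivAt_id t0).add_const c) hne
      have hqne : t0 / (t0 + c) ≠ 0 := by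
        rw [hs]; exact ne_of_gt (div_pos (hlam _) hspos)
      have hmul := hq.fun_mul (hq.log hqne)
      refine hmul.congr_deriv (Eq.symm ?_)
      rw [hC, if_pos rfl, ← hs, ← ht0]
      have ht0pos : (0:ℝ) < t0 := ht0 ▸ hlam _
      have ht0ne : t0 ≠ 0 := ne_of_gt ht0pos
      field_simp
      ring
    · simp only [Function.update_of_ne hjk]
      have hq : HasDerivAt (fun t => lam j / (t + c))
          ((0 * (t0 + c) - lam j * 1) / (t0 + c) ^ 2) t0 :=
        (hasDerivAt_const t0 (lam j)).div ((hasDerivAt_id t0).add_const c) hne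
      have hqne : lam j / (t0 + c) ≠ 0 := by
        rw [hs]; exact ne_of_gt (div_pos (hlam j) hspos)
      have hmul := hq.fun_mul (hq.log hqne)
      refine hmul.congr_deriv (Eq.symm ?_)
      rw [hC, if_neg hjk, ← hs]
      have hjpos := hlam j
      field_simp
      ring
  have hsum := HasDerivAt.fun_sum (fun j (_ : j ∈ Finset.univ) => key j)
  have hexp := (hsum.fun_neg).exp
  convert hexp using 1
  rw [ht0, Function.update_eq_self, hs, hξ lam, mul_comm]
end
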